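/- arXiv:2509.00121 — 3 statements merged into one kernel-verified Lean document; each statement's English description precedes it below -/
import Mathlib

section
/- For every integer m ≥ 2, the fractions 2m/(4m+1) and (2m+1)/(4m) both belong to the Farey sequence of order 4m + 3, exactly m + 4 fractions of the Farey sequence of order 4m + 3 lie strictly between them (in particular both (2m+1)/(4m+3) and (2m+2)/(4m+3) lie strictly between them), and they are not similarly ordered. -/
set_option maxHeartbeats 1000000


/-- The Farey fractions of order `n`: the rationals in `[0,1]` whose (reduced) denominator
is at most `n`. -/
def fareySet (n : ℕ) : Finset ℚ :=
  ((Finset.range (n + 1) ×ˢ Finset.range (n + 1)).image fun p => (p.1 : ℚ) / (p.2 : ℚ)).filter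
    fun q => 0 ≤ q ∧ q ≤ 1 ∧ q.den ≤ n

/-- The Farey sequence of order `n`: the Farey fractions of order `n` listed in
increasing order. -/
def fareyList (n : ℕ) : List ℚ := (fareySet n).sort (· ≤ ·)

/-- Two reduced fractions `q = a/b` and `q' = a'/b'` are similarly ordered if
`(a' - a) * (b' - b) ≥ 0`. -/
def SimilarlyOrdered (q q' : ℚ) : Prop :=
  0 ≤ (q'.num - q.num) * ((q'.den : ℤ) - (q.den : ℤ))


lemma coprime_of_bezout (a b : ℕ) (u v : ℤ) (h : u*a + v*b = 1) : Nat.Coprime a b := by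
  have h1 : IsCoprime (a:ℤ) (b:ℤ) := ⟨u, v, by linarith⟩
  have h2 := Int.isCoprime_iff_gcd_eq_one.mp h1
  simpa [Int.gcd_natCast_natCast] using h2

lemma den_div_nat (a b : ℕ) (hb : 0 < b) (h : Nat.Coprime a b) : ((a:ℚ)/(b:ℚ)).den = b := by
  have := Rat.den_div_eq_of_coprime (a := (a:ℤ)) (b := (b:ℤ)) (by exact_mod_cast hb) (by simpa)
  simpa using this

lemma num_div_nat (a b : ℕ) (hb : 0 < b) (h : Nat.Coprime a b) : ((a:ℚ)/(b:ℚ)).num = a := by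
  have := Rat.num_div_eq_of_coprime (a := (a:ℤ)) (b := (b:ℤ)) (by exact_mod_cast hb) (by simpa)
  simpa using this

lemma mem_fareySet_iff {n : ℕ} (q : ℚ) :
    q ∈ fareySet n ↔ 0 ≤ q ∧ q ≤ 1 ∧ q.den ≤ n := by
  unfold fareySet
  rw [Finset.mem_filter]
  constructor
  · rintro ⟨-, h⟩; exact h
  · rintro ⟨h0, h1, hd⟩
    refine ⟨Finset.mem_image.mpr ⟨(q.num.toNat, q.den), ?_, ?_⟩, h0, h1, hd⟩
    · have hnum : 0 ≤ q.num := Rat.num_nonneg.mpr h0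
      have hq : (q.num : ℚ) ≤ (q.den : ℚ) := by
        rw [← Rat.num_div_den q] at h1
        have hden : (0:ℚ) < (q.den : ℚ) := by exact_mod_cast q.pos
        exact (div_le_one hden).mp h1
      have hq' : q.num ≤ (q.den : ℤ) := by exact_mod_cast hq
      rw [Finset.mem_product, Finset.mem_range, Finset.mem_range]
      constructor <;> omega
    · have hnum : 0 ≤ q.num := Rat.num_nonneg.mpr h0
      have hc : ((q.num.toNat : ℕ) : ℚ) = (q.num : ℚ) := by
        exact_mod_cast Int.toNat_of_nonneg hnum
      simp only [hc]
      exact q.num_div_den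

lemma mem_fareySet_of (n a b : ℕ) (hb : 0 < b) (h : Nat.Coprime a b) (hab : a ≤ b)
    (hbn : b ≤ n) : (a:ℚ)/(b:ℚ) ∈ fareySet n := by
  rw [mem_fareySet_iff]
  have hbq : (0:ℚ) < (b:ℚ) := by exact_mod_cast hb
  refine ⟨by positivity, (div_le_one hbq).mpr (by exact_mod_cast hab), ?_⟩
  rw [den_div_nat a b hb h]; exact hbn

lemma in_filter_of (m a b : ℕ) (hm : 2 ≤ m) (hb : 0 < b) (hcop : Nat.Coprime a b)
    (hab : a ≤ b) (hbn : b ≤ 4*m+3)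
    (hl : 2*m*b < a*(4*m+1)) (hu : a*(4*m) < (2*m+1)*b) :
    (a:ℚ)/(b:ℚ) ∈ fareySet (4*m+3) ∧
      (2*(m:ℚ))/(4*m+1) < (a:ℚ)/(b:ℚ) ∧ (a:ℚ)/(b:ℚ) < (2*(m:ℚ)+1)/(4*m) := by
  have hbq : (0:ℚ) < (b:ℚ) := by exact_mod_cast hb
  have h41 : (0:ℚ) < 4*(m:ℚ)+1 := by positivity
  have h40 : (0:ℚ) < 4*(m:ℚ) := by
    have : (0:ℚ) < (m:ℚ) := by exact_mod_cast (by omega : 0 < m)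
    linarith
  refine ⟨mem_fareySet_of _ a b hb hcop hab hbn, ?_, ?_⟩
  · rw [div_lt_div_iff₀ h41 hbq]
    push_cast
    exact_mod_cast (by push_cast; exact_mod_cast hl : (2*(m:ℚ))*b < (a:ℚ)*(4*m+1))
  · rw [div_lt_div_iff₀ hbq h40]
    exact_mod_cast (by push_cast; exact_mod_cast hu : (a:ℚ)*(4*m) < (2*(m:ℚ)+1)*b)

lemma farey_filter_eq (m : ℕ) (hm : 2 ≤ m) :
    ((fareySet (4 * m + 3)).filter fun q =>
        (2 * (m : ℚ)) / (4 * m + 1) < q ∧ q < (2 * (m : ℚ) + 1) / (4 * m)) =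
      insert ((2 * (m : ℚ) + 1) / (4 * m + 3))
        (insert (1/2)
          ((Finset.range (m+2)).image fun k : ℕ => ((m:ℚ)+1+k)/(2*m+1+2*k))) := by
  have hgcast : ∀ k : ℕ, ((m:ℚ)+1+k)/(2*m+1+2*k)
      = ((m+1+k : ℕ):ℚ)/((2*m+1+2*k : ℕ):ℚ) := by
    intro k; push_cast; ring_nf
  have hgcop : ∀ k : ℕ, Nat.Coprime (m+1+k) (2*m+1+2*k) :=
    fun k => coprime_of_bezout _ _ 2 (-1) (by push_cast; ring)
  have he0cast : (2 * (m : ℚ) + 1) / (4 * m + 3)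
      = ((2*m+1 : ℕ):ℚ)/((4*m+3 : ℕ):ℚ) := by push_cast; ring_nf
  have he0cop : Nat.Coprime (2*m+1) (4*m+3) :=
    coprime_of_bezout _ _ (-2) 1 (by push_cast; ring)
  ext q
  simp only [Finset.mem_filter, mem_fareySet_iff, Finset.mem_insert, Finset.mem_image,
    Finset.mem_range]
  constructor
  · rintro ⟨⟨h0, h1, hden⟩, hlo, hhi⟩
    set A := q.num.natAbs with hA
    set B := q.den with hB
    have hnum0 : 0 ≤ q.num := Rat.num_nonneg.mpr h0
    have hAe : q.num = (A:ℤ) := (Int.natAbs_of_nonneg hnum0).symm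
    have hBpos : 0 < B := q.pos
    have hcop : Nat.Coprime A B := q.reduced
    have hqe : q = (A:ℚ)/(B:ℚ) := by
      conv_lhs => rw [← Rat.num_div_den q]
      rw [hAe]; push_cast; rfl
    have hBq : (0:ℚ) < (B:ℚ) := by exact_mod_cast hBpos
    have h41 : (0:ℚ) < 4*(m:ℚ)+1 := by positivity
    have h40 : (0:ℚ) < 4*(m:ℚ) := by
      have : (0:ℚ) < (m:ℚ) := by exact_mod_cast (by omega : 0 < m)
      linarith
    rw [hqe] at hlo hhi
    rw [div_lt_div_iff₀ h41 hBq] at hlo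
    rw [div_lt_div_iff₀ hBq h40] at hhi
    have IL : 2*(m:ℤ)*B < A*(4*m+1) := by exact_mod_cast hlo
    have IU : (A:ℤ)*(4*m) < (2*m+1)*B := by exact_mod_cast hhi
    have hmz : (2:ℤ) ≤ (m:ℤ) := by exact_mod_cast hm
    have hbnz : (B:ℤ) ≤ 4*(m:ℤ)+3 := by exact_mod_cast hden
    have hABz : (A:ℤ) ≤ B := by
      have : (A:ℚ) ≤ B := by
        rw [hqe] at h1; exact_mod_cast (div_le_one hBq).mp h1
      exact_mod_cast this
    -- d := 2A - B bounds
    have hd2 : 2*(A:ℤ) ≤ B + 2 := by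
      by_contra hc
      push_neg at hc
      have hkey : (m:ℤ)*(B+3) ≤ m*(2*A) :=
        mul_le_mul_of_nonneg_left (by omega) (by omega)
      nlinarith [IU]
    have hdm1 : (B:ℤ) ≤ 2*A + 1 := by
      by_contra hc
      push_neg at hc
      have hkey : (m:ℤ)*(2*A+2) ≤ m*B :=
        mul_le_mul_of_nonneg_left (by omega) (by omega)
      nlinarith [IL]
    have hcase : (B:ℤ) = 2*A+1 ∨ (B:ℤ) = 2*A ∨ 2*(A:ℤ) = B+1 ∨ 2*(A:ℤ) = B+2 := by omega
    rcases hcase with hc | hc | hc | hc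
    · -- d = -1 : q = (2m+1)/(4m+3)
      left
      rw [hc] at IL
      have ha : 2*(m:ℤ) < A := by nlinarith [IL]
      have hAv : A = 2*m+1 := by omega
      have hBv : B = 4*m+3 := by omega
      rw [hqe, hAv, hBv, he0cast]
    · -- d = 0 : q = 1/2
      right; left
      have hdvd : A ∣ Nat.gcd A B := Nat.dvd_gcd dvd_rfl ⟨2, by omega⟩
      rw [hcop] at hdvd
      have hA1 : A = 1 := Nat.dvd_one.mp hdvd
      have hB1 : B = 2 := by omega
      rw [hqe, hA1, hB1]; norm_num
    · -- d = 1
      right; right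
      have h2 : (2*(A:ℤ))*(4*m) < 2*((2*m+1)*B) := by linarith [IU]
      rw [hc] at h2
      have ha : 2*(m:ℤ) < B := by nlinarith [h2]
      have hBlb : 2*m+1 ≤ B := by omega
      refine ⟨(B - (2*m+1))/2, by omega, ?_⟩
      have hk1 : m+1+(B - (2*m+1))/2 = A := by omega
      have hk2 : 2*m+1+2*((B - (2*m+1))/2) = B := by omega
      rw [hgcast, hk1, hk2, hqe]
    · -- d = 2 : impossible
      exfalso
      have h2 : (2*(A:ℤ))*(4*m) < 2*((2*m+1)*B) := by linarith [IU]
      rw [hc] at h2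
      have hb4 : 4*(m:ℤ) < B := by nlinarith [h2]
      have hAv : A = 2*m+2 := by omega
      have hBv : B = 4*m+2 := by omega
      have hdvd : 2 ∣ Nat.gcd A B := Nat.dvd_gcd ⟨m+1, by omega⟩ ⟨2*m+1, by omega⟩
      rw [hcop] at hdvd
      omega
  · rintro (rfl | rfl | ⟨k, hk, rfl⟩)
    · rw [he0cast]
      have := in_filter_of m (2*m+1) (4*m+3) hm (by omega) he0cop (by omega) (by omega)
        (by nlinarith) (by nlinarith)
      rw [mem_fareySet_iff] at this
      exact this
    · have h12 : (1/2 : ℚ) = ((1:ℕ):ℚ)/((2:ℕ):ℚ) := by norm_num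
      rw [h12]
      have := in_filter_of m 1 2 hm (by omega) (Nat.coprime_one_left 2) (by omega)
        (by omega) (by omega) (by omega)
      rw [mem_fareySet_iff] at this
      exact this
    · rw [hgcast]
      have := in_filter_of m (m+1+k) (2*m+1+2*k) hm (by omega) (hgcop k) (by omega)
        (by omega) (by nlinarith) (by nlinarith)
      rw [mem_fareySet_iff] at this
      exact this

lemma farey_card (m : ℕ) (hm : 2 ≤ m) :
    (insert ((2 * (m : ℚ) + 1) / (4 * m + 3))
        (insert (1/2)
          ((Finset.range (m+2)).image fun k : ℕ => ((m:ℚ)+1+k)/(2*m+1+2*k)))).card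
      = m + 4 := by
  have hgcast : ∀ k : ℕ, ((m:ℚ)+1+k)/(2*m+1+2*k)
      = ((m+1+k : ℕ):ℚ)/((2*m+1+2*k : ℕ):ℚ) := by
    intro k; push_cast; ring_nf
  have hgcop : ∀ k : ℕ, Nat.Coprime (m+1+k) (2*m+1+2*k) :=
    fun k => coprime_of_bezout _ _ 2 (-1) (by push_cast; ring)
  have hgden : ∀ k : ℕ, (((m:ℚ)+1+k)/(2*m+1+2*k)).den = 2*m+1+2*k := by
    intro k; rw [hgcast]; exact den_div_nat _ _ (by omega) (hgcop k)
  have hgnum : ∀ k : ℕ, (((m:ℚ)+1+k)/(2*m+1+2*k)).num = (m+1+k : ℕ) := by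
    intro k; rw [hgcast]; exact num_div_nat _ _ (by omega) (hgcop k)
  have he0cast : (2 * (m : ℚ) + 1) / (4 * m + 3)
      = ((2*m+1 : ℕ):ℚ)/((4*m+3 : ℕ):ℚ) := by push_cast; ring_nf
  have he0cop : Nat.Coprime (2*m+1) (4*m+3) :=
    coprime_of_bezout _ _ (-2) 1 (by push_cast; ring)
  have he0den : ((2 * (m : ℚ) + 1) / (4 * m + 3)).den = 4*m+3 := by
    rw [he0cast]; exact den_div_nat _ _ (by omega) he0cop
  have he0num : ((2 * (m : ℚ) + 1) / (4 * m + 3)).num = (2*m+1 : ℕ) := by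
    rw [he0cast]; exact num_div_nat _ _ (by omega) he0cop
  have h12den : ((1:ℚ)/2).den = 2 := by
    have : ((1:ℚ)/2) = ((1:ℕ):ℚ)/((2:ℕ):ℚ) := by norm_num
    rw [this]; exact den_div_nat 1 2 (by omega) (Nat.coprime_one_left 2)
  have hinj : Set.InjOn (fun k : ℕ => ((m:ℚ)+1+k)/(2*m+1+2*k)) (Finset.range (m+2)) := by
    intro k _ l _ h
    have := congrArg Rat.den h
    simp only [hgden] at this
    omega
  have h2 : (1:ℚ)/2 ∉ (Finset.range (m+2)).image fun k : ℕ => ((m:ℚ)+1+k)/(2*m+1+2*k) := by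
    rw [Finset.mem_image]
    rintro ⟨k, -, hk⟩
    have := congrArg Rat.den hk
    rw [hgden, h12den] at this
    omega
  have h1 : (2 * (m : ℚ) + 1) / (4 * m + 3) ∉
      insert ((1:ℚ)/2) ((Finset.range (m+2)).image fun k : ℕ => ((m:ℚ)+1+k)/(2*m+1+2*k)) := by
    rw [Finset.mem_insert, Finset.mem_image]
    rintro (h | ⟨k, -, hk⟩)
    · have := congrArg Rat.den h
      rw [he0den, h12den] at this
      omega
    · have hd := congrArg Rat.den hk
      have hn := congrArg Rat.num hk
      rw [hgden, he0den] at hd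
      rw [hgnum, he0num] at hn
      have hn' : m+1+k = 2*m+1 := by exact_mod_cast hn
      omega
  rw [Finset.card_insert_of_notMem h1, Finset.card_insert_of_notMem h2,
    Finset.card_image_of_injOn hinj, Finset.card_range]

/-- For every `m ≥ 2`, the fractions `2m/(4m+1)` and `(2m+1)/(4m)` both belong to the Farey
sequence of order `4m + 3`, exactly `m + 4` Farey fractions of order `4m + 3` lie strictly
between them (in particular both `(2m+1)/(4m+3)` and `(2m+2)/(4m+3)` do), and they are not
similarly ordered. -/
theorem farey_upper_bound_mod_three (m : ℕ) (hm : 2 ≤ m) :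
    (2 * (m : ℚ)) / (4 * m + 1) ∈ fareySet (4 * m + 3) ∧
    (2 * (m : ℚ) + 1) / (4 * m) ∈ fareySet (4 * m + 3) ∧
    ((fareySet (4 * m + 3)).filter fun q =>
        (2 * (m : ℚ)) / (4 * m + 1) < q ∧ q < (2 * (m : ℚ) + 1) / (4 * m)).card = m + 4 ∧
    ((2 * (m : ℚ) + 1) / (4 * m + 3) ∈ fareySet (4 * m + 3) ∧
      (2 * (m : ℚ)) / (4 * m + 1) < (2 * (m : ℚ) + 1) / (4 * m + 3) ∧
      (2 * (m : ℚ) + 1) / (4 * m + 3) < (2 * (m : ℚ) + 1) / (4 * m)) ∧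
    ((2 * (m : ℚ) + 2) / (4 * m + 3) ∈ fareySet (4 * m + 3) ∧
      (2 * (m : ℚ)) / (4 * m + 1) < (2 * (m : ℚ) + 2) / (4 * m + 3) ∧
      (2 * (m : ℚ) + 2) / (4 * m + 3) < (2 * (m : ℚ) + 1) / (4 * m)) ∧
    ((2 * (m : ℤ) + 1) - 2 * (m : ℤ)) * (4 * (m : ℤ) - (4 * (m : ℤ) + 1)) < 0 := by
  refine ⟨?_, ?_, ?_, ?_, ?_, ?_⟩
  · have hc : (2 * (m : ℚ)) / (4 * m + 1) = ((2*m:ℕ):ℚ)/((4*m+1:ℕ):ℚ) := by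
      push_cast; ring_nf
    rw [hc]
    exact mem_fareySet_of _ _ _ (by omega)
      (coprime_of_bezout _ _ (-2) 1 (by push_cast; ring)) (by omega) (by omega)
  · have hc : (2 * (m : ℚ) + 1) / (4 * m) = ((2*m+1:ℕ):ℚ)/((4*m:ℕ):ℚ) := by
      push_cast; ring_nf
    rw [hc]
    exact mem_fareySet_of _ _ _ (by omega)
      (coprime_of_bezout _ _ (1 - 2*(m:ℤ)) m (by push_cast; ring)) (by omega) (by omega)
  · rw [farey_filter_eq m hm]
    exact farey_card m hm
  · have hc : (2 * (m : ℚ) + 1) / (4 * m + 3) = ((2*m+1:ℕ):ℚ)/((4*m+3:ℕ):ℚ) := by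
      push_cast; ring_nf
    rw [hc]
    exact in_filter_of m (2*m+1) (4*m+3) hm (by omega)
      (coprime_of_bezout _ _ (-2) 1 (by push_cast; ring)) (by omega) (by omega)
      (by nlinarith) (by nlinarith)
  · have hc : (2 * (m : ℚ) + 2) / (4 * m + 3) = ((2*m+2:ℕ):ℚ)/((4*m+3:ℕ):ℚ) := by
      push_cast; ring_nf
    rw [hc]
    exact in_filter_of m (2*m+2) (4*m+3) hm (by omega)
      (coprime_of_bezout _ _ 2 (-1) (by push_cast; ring)) (by omega) (by omega)
      (by nlinarith) (by nlinarith)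
  · have h : ((2 * (m : ℤ) + 1) - 2 * (m : ℤ)) * (4 * (m : ℤ) - (4 * (m : ℤ) + 1)) = -1 := by
      ring
    linarith [h]
end

section
/- For every positive integer n, the number N of fractions in the Farey sequence of order n satisfies N > n²/4; equivalently, 1 + Σ_{i=1}^{n} φ(i) > n²/4, where φ is Euler's totient function. -/
/-!
A fraction in `[0, 1]` with denominator `b ≤ n` is `a / b` with `0 ≤ a ≤ b` coprime to `b`, so the
Farey set has `1 + ∑ φ(i)` elements. Splitting the coprime pairs in `[1, n]²` along the diagonal,
where only `(1, 1)` is coprime, there are `2 ∑ φ(i) - 1` of them; every other pair lies in one of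
the `⌊n/p⌋²`-element sets of pairs divisible by a prime `p ≤ n`. Hence
`2 ∑ φ(i) - 1 ≥ n² (1 - ∑ₚ p⁻²)`, and `∑ₚ p⁻² ≤ 1/2`: the prime `2` contributes `1/4`, and the
bound `1/(2k+3)² ≤ 1/((2k+2)(2k+4))` telescopes the odd terms to at most `1/4`.
-/

open Finset

theorem Rat.num_div_natCast_of_coprime {a b : ℕ} (hb : b ≠ 0) (h : a.Coprime b) :
    ((a : ℚ) / b).num = a := by
  simpa using Rat.num_div_eq_of_coprime (a := a) (b := b) (by omega) (by simpa)

theorem Rat.den_div_natCast_of_coprime {a b : ℕ} (hb : b ≠ 0) (h : a.Coprime b) :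
    ((a : ℚ) / b).den = b := by
  simpa using Rat.den_div_eq_of_coprime (a := a) (b := b) (by omega) (by simpa)

theorem Rat.natCast_num_toNat_div_den {q : ℚ} (hq : 0 ≤ q) : (q.num.toNat : ℚ) / q.den = q := by
  rw [← Int.cast_natCast, Int.toNat_of_nonneg (Rat.num_nonneg.2 hq), Rat.num_div_den]

theorem mem_fareySet {n : ℕ} {q : ℚ} : q ∈ fareySet n ↔ 0 ≤ q ∧ q ≤ 1 ∧ q.den ≤ n := by
  refine ⟨fun h => (mem_filter.1 h).2, fun h => mem_filter.2 ⟨mem_image.2 ?_, h⟩⟩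
  obtain ⟨hq0, hq1, hden⟩ := h
  have hnum : q.num ≤ q.den := Rat.num_le_denom_iff.2 hq1
  refine ⟨(q.num.toNat, q.den), ?_, Rat.natCast_num_toNat_div_den hq0⟩
  simp only [mem_product, mem_range]
  omega

theorem card_filter_range_succ_coprime (b : ℕ) :
    #{a ∈ range (b + 1) | b.Coprime a} = Nat.totient b + if b = 1 then 1 else 0 := by
  rw [range_add_one, filter_insert, Nat.totient_eq_card_coprime]
  simp only [Nat.coprime_self]
  split_ifs
  · exact card_insert_of_notMem (by simp)
  · rfl

theorem card_fareySet (n : ℕ) (hn : 1 ≤ n) :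
    #(fareySet n) = 1 + ∑ i ∈ Icc 1 n, Nat.totient i := by
  have hcard : #(fareySet n) = #((Icc 1 n).sigma fun b => {a ∈ range (b + 1) | b.Coprime a}) := by
    refine card_nbij' (fun q => ⟨q.den, q.num.toNat⟩) (fun x => (x.2 : ℚ) / x.1) ?_ ?_ ?_ ?_
    · intro q hq
      obtain ⟨hq0, hq1, hden⟩ := mem_fareySet.1 hq
      have hnum : q.num ≤ q.den := Rat.num_le_denom_iff.2 hq1
      have hcop := q.reduced
      rw [← Int.toNat_of_nonneg (Rat.num_nonneg.2 hq0), Int.natAbs_natCast] at hcop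
      simp only [mem_coe, mem_sigma, mem_Icc, mem_filter, mem_range]
      exact ⟨⟨q.pos, hden⟩, by omega, hcop.symm⟩
    · rintro ⟨b, a⟩ hx
      simp only [mem_coe, mem_sigma, mem_Icc, mem_filter, mem_range] at hx
      obtain ⟨⟨hb1, hbn⟩, hab, hcop⟩ := hx
      rw [mem_coe, mem_fareySet, Rat.den_div_natCast_of_coprime (by omega) hcop.symm,
        div_le_one (by positivity)]
      exact ⟨by positivity, by exact_mod_cast Nat.lt_succ_iff.1 hab, hbn⟩
    · intro q hq
      exact Rat.natCast_num_toNat_div_den (mem_fareySet.1 hq).1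
    · rintro ⟨b, a⟩ hx
      simp only [mem_coe, mem_sigma, mem_Icc, mem_filter, mem_range] at hx
      have hb : b ≠ 0 := by omega
      simp [Rat.num_div_natCast_of_coprime hb hx.2.2.symm,
        Rat.den_div_natCast_of_coprime hb hx.2.2.symm]
  rw [hcard, card_sigma, sum_congr rfl fun b _ => card_filter_range_succ_coprime b, sum_add_distrib,
    sum_ite_eq', if_pos (mem_Icc.2 ⟨le_rfl, hn⟩), add_comm]

def coprimePairs (n : ℕ) : Finset (ℕ × ℕ) := {p ∈ Icc 1 n ×ˢ Icc 1 n | p.1.Coprime p.2}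

theorem card_coprimePairs_filter_fst_le_snd (n : ℕ) :
    #{p ∈ coprimePairs n | p.1 ≤ p.2} = ∑ i ∈ Icc 1 n, Nat.totient i := by
  let e : (Σ _ : ℕ, ℕ) ≃ ℕ × ℕ := (Equiv.sigmaEquivProd ℕ ℕ).trans (Equiv.prodComm ℕ ℕ)
  have hcard : #((Icc 1 n).sigma fun b => {a ∈ Icc 1 b | b.Coprime a})
      = #{p ∈ coprimePairs n | p.1 ≤ p.2} := by
    refine card_equiv e fun ⟨b, a⟩ => ?_
    simp only [e, coprimePairs, mem_sigma, mem_filter, mem_product, mem_Icc, Equiv.trans_apply,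
      Equiv.sigmaEquivProd_apply, Equiv.prodComm_apply, Prod.swap_prod_mk, Nat.coprime_comm]
    constructor <;> intro h <;> refine ⟨?_, ?_⟩ <;> omega
  rw [← hcard, card_sigma]
  refine sum_congr rfl fun b _ => ?_
  rw [← Nat.filter_coprime_Ico_eq_totient b 1, add_comm, Ico_add_one_right_eq_Icc]

theorem card_coprimePairs_add_one (n : ℕ) (hn : 1 ≤ n) :
    #(coprimePairs n) + 1 = 2 * ∑ i ∈ Icc 1 n, Nat.totient i := by
  set L := {p ∈ coprimePairs n | p.1 ≤ p.2}
  set U := {p ∈ coprimePairs n | p.2 ≤ p.1}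
  have hunion : coprimePairs n = L ∪ U := by
    rw [← filter_or, filter_true_of_mem fun p _ => le_total p.1 p.2]
  have hinter : L ∩ U = {(1, 1)} := by
    ext ⟨a, b⟩
    simp only [L, U, coprimePairs, ← filter_and, mem_filter, mem_product, mem_Icc, mem_singleton,
      Prod.mk.injEq]
    constructor
    · rintro ⟨⟨-, hab⟩, hle, hge⟩
      obtain rfl := le_antisymm hle hge
      exact ⟨(Nat.coprime_self a).1 hab, (Nat.coprime_self a).1 hab⟩
    · rintro ⟨rfl, rfl⟩
      exact ⟨⟨by omega, Nat.coprime_one_left 1⟩, le_rfl, le_rfl⟩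
  have hswap : #U = #L := card_equiv (Equiv.prodComm ℕ ℕ) fun ⟨a, b⟩ => by
    simp only [L, U, coprimePairs, mem_filter, mem_product, Equiv.prodComm_apply,
      Prod.swap_prod_mk, Nat.coprime_comm, and_comm]
  have := card_union_add_card_inter L U
  rw [hinter, card_singleton, ← hunion, hswap, card_coprimePairs_filter_fst_le_snd] at this
  omega

theorem Nat.Icc_one_filter_dvd_card_eq_div (n d : ℕ) : #{x ∈ Icc 1 n | d ∣ x} = n / d :=
  Nat.Ioc_filter_dvd_card_eq_div n d

theorem sq_le_card_coprimePairs_add_sum_sq_div_prime (n : ℕ) :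
    n ^ 2 ≤ #(coprimePairs n) + ∑ p ∈ (n + 1).primesBelow, (n / p) ^ 2 := by
  set s := Icc 1 n ×ˢ Icc 1 n
  have hcover : {x ∈ s | ¬ x.1.Coprime x.2} ⊆
      (n + 1).primesBelow.biUnion fun p => {x ∈ s | p ∣ x.1 ∧ p ∣ x.2} := by
    rintro ⟨a, b⟩ hab
    simp only [s, mem_filter, mem_product, mem_Icc] at hab
    obtain ⟨⟨⟨ha, han⟩, hb, hbn⟩, hcop⟩ := hab
    obtain ⟨p, hp, hpa, hpb⟩ := Nat.Prime.not_coprime_iff_dvd.1 hcop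
    have := Nat.le_of_dvd ha hpa
    simp only [mem_biUnion, Nat.mem_primesBelow, mem_filter, s, mem_product, mem_Icc]
    exact ⟨p, ⟨by omega, hp⟩, ⟨⟨ha, han⟩, hb, hbn⟩, hpa, hpb⟩
  have hmultiples (p : ℕ) : #{x ∈ s | p ∣ x.1 ∧ p ∣ x.2} = (n / p) ^ 2 := by
    rw [filter_product, card_product, Nat.Icc_one_filter_dvd_card_eq_div, sq]
  calc n ^ 2 = #s := by simp [s, sq]
    _ = #(coprimePairs n) + #{x ∈ s | ¬ x.1.Coprime x.2} :=
        (card_filter_add_card_filter_not _).symm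
    _ ≤ #(coprimePairs n) + ∑ p ∈ (n + 1).primesBelow, (n / p) ^ 2 := by
        gcongr
        calc _ ≤ _ := card_le_card hcover
          _ ≤ _ := card_biUnion_le
          _ = _ := sum_congr rfl fun p _ => hmultiples p

theorem sum_range_one_div_odd_sq_le (m : ℕ) :
    ∑ k ∈ range m, 1 / (2 * k + 3 : ℝ) ^ 2 ≤ 1 / 4 := by
  have hterm (k : ℕ) :
      1 / (2 * k + 3 : ℝ) ^ 2 ≤ 1 / (4 * ((k : ℝ) + 1)) - 1 / (4 * ((k + 1 : ℕ) + 1)) := by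
    have hsplit : 1 / (4 * ((k : ℝ) + 1)) - 1 / (4 * ((k + 1 : ℕ) + 1))
        = 1 / (4 * (k + 1) * (k + 2)) := by
      push_cast; field_simp; ring
    rw [hsplit]
    exact one_div_le_one_div_of_le (by positivity) (by nlinarith)
  calc _ ≤ ∑ k ∈ range m, (1 / (4 * ((k : ℝ) + 1)) - 1 / (4 * ((k + 1 : ℕ) + 1))) :=
        sum_le_sum fun k _ => hterm k
    _ = 1 / 4 - 1 / (4 * (m + 1)) := by
        rw [sum_range_sub' (fun k : ℕ => 1 / (4 * ((k : ℝ) + 1)))]; simp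
    _ ≤ 1 / 4 := sub_le_self _ (by positivity)

theorem sum_one_div_sq_le_half_of_prime (s : Finset ℕ) (hs : ∀ p ∈ s, p.Prime) :
    ∑ p ∈ s, 1 / (p : ℝ) ^ 2 ≤ 1 / 2 := by
  set m := s.sup id
  have h2 : 2 ∉ (range m).image (fun k => 2 * k + 3) := by simp
  have hsub : s ⊆ insert 2 ((range m).image (fun k => 2 * k + 3)) := by
    intro p hp
    have hpm : p ≤ m := le_sup (f := id) hp
    rcases (hs p hp).eq_two_or_odd' with rfl | ⟨j, rfl⟩
    · exact mem_insert_self _ _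
    · have := (hs _ hp).two_le
      exact mem_insert_of_mem (mem_image.2 ⟨j - 1, mem_range.2 (by omega), by omega⟩)
  calc ∑ p ∈ s, 1 / (p : ℝ) ^ 2
      ≤ ∑ p ∈ insert 2 ((range m).image (fun k => 2 * k + 3)), 1 / ((p : ℕ) : ℝ) ^ 2 :=
        sum_le_sum_of_subset_of_nonneg hsub fun _ _ _ => by positivity
    _ = 1 / 4 + ∑ k ∈ range m, 1 / (2 * k + 3 : ℝ) ^ 2 := by
        rw [sum_insert h2, sum_image fun a _ b _ h => by omega]
        push_cast; norm_num
    _ ≤ 1 / 2 := by linarith [sum_range_one_div_odd_sq_le m]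

theorem sum_sq_div_prime_le (n : ℕ) (s : Finset ℕ) (hs : ∀ p ∈ s, p.Prime) :
    ∑ p ∈ s, ((n / p : ℕ) : ℝ) ^ 2 ≤ (n : ℝ) ^ 2 / 2 := by
  calc ∑ p ∈ s, ((n / p : ℕ) : ℝ) ^ 2 ≤ ∑ p ∈ s, (n : ℝ) ^ 2 * (1 / (p : ℝ) ^ 2) := by
        refine sum_le_sum fun p _ => ?_
        rw [mul_one_div, ← div_pow]
        exact pow_le_pow_left₀ (by positivity) Nat.cast_div_le 2
    _ = (n : ℝ) ^ 2 * ∑ p ∈ s, 1 / (p : ℝ) ^ 2 := (mul_sum _ _ _).symm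
    _ ≤ (n : ℝ) ^ 2 * (1 / 2) := by gcongr; exact sum_one_div_sq_le_half_of_prime s hs
    _ = (n : ℝ) ^ 2 / 2 := by ring

theorem sq_div_four_add_half_le_sum_totient (n : ℕ) (hn : 1 ≤ n) :
    (n : ℝ) ^ 2 / 4 + 1 / 2 ≤ ((∑ i ∈ Icc 1 n, Nat.totient i : ℕ) : ℝ) := by
  have hpairs : ((n ^ 2 : ℕ) : ℝ) ≤
      ((#(coprimePairs n) + ∑ p ∈ (n + 1).primesBelow, (n / p) ^ 2 : ℕ) : ℝ) :=
    Nat.cast_le.2 (sq_le_card_coprimePairs_add_sum_sq_div_prime n)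
  have hdiag : ((#(coprimePairs n) + 1 : ℕ) : ℝ) = ((2 * ∑ i ∈ Icc 1 n, Nat.totient i : ℕ) : ℝ) :=
    congrArg _ (card_coprimePairs_add_one n hn)
  have hprimes := sum_sq_div_prime_le n (n + 1).primesBelow fun _ => Nat.prime_of_mem_primesBelow
  push_cast at hpairs hdiag ⊢
  linarith

/-- For every positive integer `n`, the number `N` of fractions in the Farey sequence of
order `n` satisfies `N > n²/4`; equivalently, `1 + ∑_{i=1}^{n} φ(i) > n²/4`. -/
theorem farey_card_gt_sq_div_four (n : ℕ) (hn : 1 ≤ n) :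
    (n : ℝ) ^ 2 / 4 < ((fareySet n).card : ℝ) ∧
    (n : ℝ) ^ 2 / 4 < ((1 + ∑ i ∈ Finset.Icc 1 n, Nat.totient i : ℕ) : ℝ) := by
  have hsum := sq_div_four_add_half_le_sum_totient n hn
  rw [card_fareySet n hn]
  push_cast at hsum ⊢
  constructor <;> linarith
end

section
/- Let n be a positive integer and let a_k/b_k and a_l/b_l, with indices k < l, be fractions in the Farey sequence of order n that are not similarly ordered, i.e. (a_l − a_k)(b_l − b_k) < 0. If moreover a_k/b_k ≥ 1/2, then a_l/b_l − a_k/b_k ≥ 3/(2(b_k − 1)). -/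
/-!
Only two features of the Farey sequence matter: it is increasing, so `q := a_k/b_k < q' := a_l/b_l`,
and `q ≥ 0`. Of the two ways of not being similarly ordered, `a' < a, b' > b` would give
`q' ≤ a/b' ≤ a/b = q`; hence `a' > a` and `b' < b`. Then
`q' - q ≥ (a + 1)/b' - q = (q + 1 + q (b - b' - 1))/b' ≥ (q + 1)/b' ≥ 3/(2 b') ≥ 3/(2 (b - 1))`.
-/

namespace Rat

theorem le_of_num_le_of_den_le {q q' : ℚ} (hq : 0 ≤ q) (hnum : q'.num ≤ q.num)
    (hden : q.den ≤ q'.den) : q' ≤ q := by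
  rw [Rat.le_iff]
  have hden' : (q.den : ℤ) ≤ q'.den := by exact_mod_cast hden
  calc q'.num * q.den ≤ q.num * q.den := by gcongr
    _ ≤ q.num * q'.den := by gcongr

theorem num_lt_num_and_den_lt_den_of_not_similarlyOrdered {q q' : ℚ} (hq : 0 ≤ q)
    (hlt : q < q') (h : ¬SimilarlyOrdered q q') : q.num < q'.num ∧ q'.den < q.den := by
  rw [SimilarlyOrdered, not_le, mul_neg_iff, sub_pos, sub_neg, sub_pos, sub_neg] at h
  rcases h with ⟨hnum, hden⟩ | ⟨hnum, hden⟩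
  · exact ⟨hnum, by exact_mod_cast hden⟩
  · exact absurd (le_of_num_le_of_den_le hq hnum.le (by exact_mod_cast hden.le)) hlt.not_ge

theorem add_one_div_den_le_sub {q q' : ℚ} (hq : 0 ≤ q) (hnum : q.num < q'.num)
    (hden : q'.den < q.den) : (q + 1) / q'.den ≤ q' - q := by
  have hnum' : (q.num : ℚ) + 1 ≤ q'.num := by exact_mod_cast hnum
  have hden' : (q'.den : ℚ) + 1 ≤ q.den := by exact_mod_cast hden
  rw [div_le_iff₀ (by exact_mod_cast q'.pos)]
  calc q + 1 ≤ q * (q.den - q'.den) + 1 := by nlinarith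
    _ = q * q.den + 1 - q * q'.den := by ring
    _ ≤ q'.num - q * q'.den := by rw [Rat.mul_den_eq_num]; linarith
    _ = (q' - q) * q'.den := by rw [sub_mul, Rat.mul_den_eq_num]

theorem three_div_two_mul_den_sub_one_le_sub_of_not_similarlyOrdered {q q' : ℚ}
    (hhalf : 1 / 2 ≤ q) (hlt : q < q') (h : ¬SimilarlyOrdered q q') :
    3 / (2 * ((q.den : ℚ) - 1)) ≤ q' - q := by
  have hq : 0 ≤ q := le_trans (by norm_num) hhalf
  obtain ⟨hnum, hden⟩ := num_lt_num_and_den_lt_den_of_not_similarlyOrdered hq hlt h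
  have hden' : (q'.den : ℚ) ≤ q.den - 1 := by
    have : (q'.den : ℚ) + 1 ≤ q.den := by exact_mod_cast hden
    linarith
  have hpos : (0 : ℚ) < q'.den := by exact_mod_cast q'.pos
  calc 3 / (2 * ((q.den : ℚ) - 1)) ≤ 3 / (2 * q'.den) := by gcongr
    _ = 3 / 2 / q'.den := by ring
    _ ≤ (q + 1) / q'.den := by gcongr; linarith
    _ ≤ q' - q := add_one_div_den_le_sub hq hnum hden

end Rat

theorem fareyList_get_strictMono (n : ℕ) : StrictMono (fareyList n).get :=
  (Finset.sortedLT_sort (fareySet n)).strictMono_get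

theorem farey_not_similarly_ordered_gap_of_half_le_general (n : ℕ)
    (k l : Fin (fareyList n).length) (hkl : k < l)
    (h : (((fareyList n).get l).num - ((fareyList n).get k).num) *
        ((((fareyList n).get l).den : ℤ) - (((fareyList n).get k).den : ℤ)) < 0)
    (hhalf : (1 : ℚ) / 2 ≤ (fareyList n).get k) :
    3 / (2 * (((((fareyList n).get k).den : ℚ)) - 1)) ≤
      (fareyList n).get l - (fareyList n).get k :=
  Rat.three_div_two_mul_den_sub_one_le_sub_of_not_similarlyOrdered hhalf
    (fareyList_get_strictMono n hkl) (not_le.mpr h)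

/-- If `a_k/b_k` and `a_l/b_l` (with `k < l`) are fractions in the Farey sequence of order
`n` that are not similarly ordered, and moreover `a_k/b_k ≥ 1/2`, then
`a_l/b_l − a_k/b_k ≥ 3/(2(b_k − 1))`. -/
theorem farey_not_similarly_ordered_gap_of_half_le (n : ℕ) (hn : 1 ≤ n)
    (k l : Fin (fareyList n).length) (hkl : k < l)
    (h : (((fareyList n).get l).num - ((fareyList n).get k).num) *
        ((((fareyList n).get l).den : ℤ) - (((fareyList n).get k).den : ℤ)) < 0)
    (hhalf : (1 : ℚ) / 2 ≤ (fareyList n).get k) :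
    3 / (2 * (((((fareyList n).get k).den : ℚ)) - 1)) ≤
      (fareyList n).get l - (fareyList n).get k :=
  farey_not_similarly_ordered_gap_of_half_le_general n k l hkl h hhalf
end
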